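/- arXiv:1803.00351 — 2 statements merged into one kernel-verified Lean document; each statement's English description precedes it below -/
import Mathlib

section
/- Let 1 ≤ p < ∞. If Y is a closed subspace of a dual space X* and X has property RDP_p, then every weakly-p-Dunford-Pettis subset of Y is relatively weakly compact (Y has property RDP*_p). In particular, if Y* has property RDP_p then Y has property RDP*_p. -/
/-!
A weakly-`p`-Dunford–Pettis set `K` in a closed subspace `W` of `X*` (or in `Z ⊆ Z**`) stays
weakly-`p`-Dunford–Pettis in `X*`, because adjoints preserve weak `p`-summability, and is
therefore a weakly-`p`-L-set, since weakly `p`-summable sequences of `X` are weakly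
`p`-summable in `X**`. By `RDP_p` its image is relatively weakly compact in `X*`. Weak limits
of sequences in the closed subspace `W` remain in `W` (Mazur), and Hahn–Banach extends every
functional on `W` to `X*`, so the weak convergence pulls back to `W`.
-/

open Filter Topology Metric NormedSpace Bornology ENNReal

noncomputable section

section Defs
variable {X Y : Type*} [NormedAddCommGroup X] [NormedSpace ℝ X]
  [NormedAddCommGroup Y] [NormedSpace ℝ Y]

/-- A sequence `x` in `X` is weakly `p`-summable if `(f (x n))ₙ ∈ ℓ_p` for every
continuous linear functional `f`. -/
def WeaklyPSummable (p : ℝ≥0∞) (x : ℕ → X) : Prop :=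
  ∀ f : StrongDual ℝ X, Memℓp (fun n => f (x n)) p

/-- A sequence is norm null if its norms tend to `0`. -/
def NormNull (x : ℕ → X) : Prop :=
  Tendsto (fun n => ‖x n‖) atTop (𝓝 0)

/-- An operator is `p`-convergent if it maps weakly `p`-summable sequences to norm
null sequences. -/
def PConvergent (p : ℝ≥0∞) (T : X →L[ℝ] Y) : Prop :=
  ∀ x : ℕ → X, WeaklyPSummable p x → NormNull fun n => T (x n)

/-- The adjoint (dual) operator `T* : Y* → X*`, `g ↦ g ∘ T`. -/
def adjOp (T : X →L[ℝ] Y) : StrongDual ℝ Y →L[ℝ] StrongDual ℝ X :=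
  (ContinuousLinearMap.compL ℝ X Y ℝ).flip T

/-- Weak convergence of a sequence to a point. -/
def WeaklyConvTo (x : ℕ → X) (a : X) : Prop :=
  ∀ f : StrongDual ℝ X, Tendsto (fun n => f (x n)) atTop (𝓝 (f a))

/-- A sequence is weakly Cauchy if `(f (x n))` converges for every functional `f`. -/
def WeaklyCauchySeq (x : ℕ → X) : Prop :=
  ∀ f : StrongDual ℝ X, ∃ l : ℝ, Tendsto (fun n => f (x n)) atTop (𝓝 l)

/-- A set is relatively weakly compact iff every sequence in it has a subsequence
weakly convergent to a point of the space (sequential form, by Eberlein–Šmulian). -/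
def RelWeaklyCompact (A : Set X) : Prop :=
  ∀ x : ℕ → X, (∀ n, x n ∈ A) →
    ∃ (a : X) (φ : ℕ → ℕ), StrictMono φ ∧ WeaklyConvTo (fun k => x (φ k)) a

/-- A set is weakly precompact if every sequence in it has a weakly Cauchy subsequence. -/
def WeaklyPrecompact (A : Set X) : Prop :=
  ∀ x : ℕ → X, (∀ n, x n ∈ A) →
    ∃ φ : ℕ → ℕ, StrictMono φ ∧ WeaklyCauchySeq (fun k => x (φ k))

/-- A weakly compact operator: the image of the closed unit ball is relatively
weakly compact. -/
def WeaklyCompactOp (T : X →L[ℝ] Y) : Prop :=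
  RelWeaklyCompact (⇑T '' closedBall 0 1)

/-- A weakly precompact operator: the image of the closed unit ball is weakly
precompact. -/
def WeaklyPrecompactOp (T : X →L[ℝ] Y) : Prop :=
  WeaklyPrecompact (⇑T '' closedBall 0 1)

/-- `g n → 0` uniformly on `A`. -/
def UnifNullOn (g : ℕ → X → ℝ) (A : Set X) : Prop :=
  ∀ ε > (0 : ℝ), ∃ N, ∀ n ≥ N, ∀ a ∈ A, |g n a| ≤ ε

/-- A weakly-`p`-Dunford-Pettis subset of `X`: bounded, and every weakly `p`-summable
sequence in `X*` tends to `0` uniformly on it. -/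
def WeaklyPDP (p : ℝ≥0∞) (A : Set X) : Prop :=
  IsBounded A ∧
    ∀ f : ℕ → StrongDual ℝ X, WeaklyPSummable p f → UnifNullOn (fun n a => f n a) A

/-- A weakly-`p`-L-subset of `X*`: bounded, and every weakly `p`-summable sequence
in `X` tends to `0` uniformly on it. -/
def WeaklyPLSet (p : ℝ≥0∞) (A : Set (StrongDual ℝ X)) : Prop :=
  IsBounded A ∧
    ∀ x : ℕ → X, WeaklyPSummable p x → UnifNullOn (fun n g => g (x n)) A

/-- A weakly-`p`-Cauchy sequence. -/
def WeaklyPCauchy (p : ℝ≥0∞) (x : ℕ → X) : Prop :=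
  ∀ φ ψ : ℕ → ℕ, StrictMono φ → StrictMono ψ →
    WeaklyPSummable p fun k => x (φ k) - x (ψ k)

/-- A weakly-`p`-precompact set: every sequence in it has a weakly-`p`-Cauchy
subsequence. -/
def WeaklyPPrecompact (p : ℝ≥0∞) (A : Set X) : Prop :=
  ∀ x : ℕ → X, (∀ n, x n ∈ A) →
    ∃ φ : ℕ → ℕ, StrictMono φ ∧ WeaklyPCauchy p fun k => x (φ k)

/-- A weakly-`p`-precompact operator. -/
def WeaklyPPrecompactOp (p : ℝ≥0∞) (T : X →L[ℝ] Y) : Prop :=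
  WeaklyPPrecompact p (⇑T '' closedBall 0 1)

/-- A `w*`-null sequence of functionals. -/
def WStarNull (f : ℕ → StrongDual ℝ X) : Prop :=
  ∀ x : X, Tendsto (fun n => f n x) atTop (𝓝 0)

/-- A limited subset of `X`: every `w*`-null sequence in `X*` tends to `0`
uniformly on it. -/
def LimitedSet (A : Set X) : Prop :=
  ∀ f : ℕ → StrongDual ℝ X, WStarNull f → UnifNullOn (fun n a => f n a) A

/-- A weakly unconditionally convergent (wuc) series. -/
def WUC (x : ℕ → X) : Prop :=
  ∀ f : StrongDual ℝ X, Summable fun n => |f (x n)|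

/-- An unconditionally converging operator: maps wuc series to unconditionally
convergent series. -/
def UncondConverging (T : X →L[ℝ] Y) : Prop :=
  ∀ x : ℕ → X, WUC x → Summable fun n => T (x n)

/-- A `V*`-subset of `X`. -/
def VStarSet (A : Set X) : Prop :=
  IsBounded A ∧ ∀ f : ℕ → StrongDual ℝ X, WUC f → UnifNullOn (fun n a => f n a) A

/-- `w*`-to-`w` continuity of an operator `T : X* → Y`, in the equivalent algebraic
form: for every `g ∈ Y*` the functional `g ∘ T` on `X*` is given by evaluation at
a point of `X`. -/
def WStarToWCont (T : StrongDual ℝ X →L[ℝ] Y) : Prop :=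
  ∀ g : StrongDual ℝ Y, ∃ x : X, ∀ f : StrongDual ℝ X, g (T f) = f x

end Defs

section SpaceProps
variable (p : ℝ≥0∞) (X : Type*) [NormedAddCommGroup X] [NormedSpace ℝ X]

/-- The Gelfand-Phillips property: every limited subset is relatively compact. -/
def GPspace : Prop :=
  ∀ A : Set X, Bornology.IsBounded A → LimitedSet A → IsCompact (closure A)

/-- The `p`-Gelfand-Phillips property: every limited weakly `p`-summable sequence is
norm null. -/
def pGP : Prop :=
  ∀ x : ℕ → X, LimitedSet (Set.range x) → WeaklyPSummable p x → NormNull x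

/-- Property `RDP_p`: every weakly-`p`-L-subset of `X*` is relatively weakly compact. -/
def RDPp : Prop :=
  ∀ A : Set (StrongDual ℝ X), WeaklyPLSet p A → RelWeaklyCompact A

/-- The Schur property. -/
def SchurSpace : Prop :=
  ∀ (x : ℕ → X) (a : X), WeaklyConvTo x a → Tendsto x atTop (𝓝 a)

/-- Weak sequential completeness. -/
def WeaklySeqComplete : Prop :=
  ∀ x : ℕ → X, WeaklyCauchySeq x → ∃ a : X, WeaklyConvTo x a

/-- Pełczyński's property (V). -/
def PropertyV : Prop :=
  ∀ (Y : Type) [NormedAddCommGroup Y] [NormedSpace ℝ Y] [CompleteSpace Y],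
    ∀ T : X →L[ℝ] Y, UncondConverging T → WeaklyCompactOp T

/-- Property (V*). -/
def PropertyVStar : Prop :=
  ∀ A : Set X, VStarSet A → RelWeaklyCompact A

/-- Reflexivity of a normed space: the canonical embedding into the double dual is
surjective. -/
def ReflexiveSpace : Prop :=
  Function.Surjective (NormedSpace.inclusionInDoubleDual ℝ X)

end SpaceProps

section Embeds
/-- `Z` embeds isomorphically into `W`. -/
def EmbedsIn (Z W : Type*) [NormedAddCommGroup Z] [NormedSpace ℝ Z]
    [NormedAddCommGroup W] [NormedSpace ℝ W] : Prop :=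
  ∃ f : Z →L[ℝ] W, ∃ c > (0 : ℝ), ∀ z : Z, c * ‖z‖ ≤ ‖f z‖

end Embeds

section
variable {E F : Type*} [NormedAddCommGroup E] [NormedSpace ℝ E]
  [NormedAddCommGroup F] [NormedSpace ℝ F] {p : ℝ≥0∞}

lemma WeaklyPSummable.map {x : ℕ → E} (hx : WeaklyPSummable p x) (T : E →L[ℝ] F) :
    WeaklyPSummable p fun n => T (x n) :=
  fun f => hx (f.comp T)

lemma WeaklyPDP.image {K : Set E} (hK : WeaklyPDP p K) (T : E →L[ℝ] F) :
    WeaklyPDP p (T '' K) := by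
  refine ⟨T.lipschitz.isBounded_image hK.1, fun f hf ε hε => ?_⟩
  obtain ⟨N, hN⟩ := hK.2 _ (hf.map (adjOp T)) ε hε
  refine ⟨N, fun n hn => ?_⟩
  rintro _ ⟨k, hk, rfl⟩
  exact hN n hn k hk

lemma WeaklyPDP.weaklyPLSet {A : Set (StrongDual ℝ E)} (hA : WeaklyPDP p A) :
    WeaklyPLSet p A :=
  ⟨hA.1, fun _ hx => hA.2 _ (hx.map (inclusionInDoubleDual ℝ E))⟩

lemma LinearIsometry.exists_dual_comp_eq (e : E →ₗᵢ[ℝ] F) (g : StrongDual ℝ E) :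
    ∃ G : StrongDual ℝ F, ∀ x, G (e x) = g x := by
  obtain ⟨G, hG, -⟩ := exists_extension_norm_eq (LinearMap.range e.toLinearMap)
    (g.comp e.equivRange.symm.toContinuousLinearEquiv.toContinuousLinearMap)
  refine ⟨G, fun x => ?_⟩
  simpa using hG (e.equivRange x)

lemma WeaklyConvTo.of_linearIsometry (e : E →ₗᵢ[ℝ] F) {x : ℕ → E} {a : E}
    (h : WeaklyConvTo (fun n => e (x n)) (e a)) : WeaklyConvTo x a := by
  intro g
  obtain ⟨G, hG⟩ := e.exists_dual_comp_eq g
  simpa only [hG] using h G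

lemma WeaklyConvTo.mem_of_convex_of_isClosed {s : Set E} (hs : Convex ℝ s) (hcl : IsClosed s)
    {x : ℕ → E} {a : E} (hx : ∀ n, x n ∈ s) (h : WeaklyConvTo x a) : a ∈ s := by
  by_contra ha
  obtain ⟨f, u, hfs, hfa⟩ := geometric_hahn_banach_closed_point hs hcl ha
  have : f a ≤ u := le_of_tendsto' (h f) fun n => (hfs _ (hx n)).le
  linarith

lemma RelWeaklyCompact.of_image_linearIsometry (e : E →ₗᵢ[ℝ] F) (hcl : IsClosed (Set.range e))
    {K : Set E} (hK : RelWeaklyCompact (e '' K)) : RelWeaklyCompact K := by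
  intro y hy
  obtain ⟨a, φ, hφ, ha⟩ := hK (fun n => e (y n)) fun n => Set.mem_image_of_mem e (hy n)
  obtain ⟨b, rfl⟩ : a ∈ Set.range e :=
    ha.mem_of_convex_of_isClosed (LinearMap.range e.toLinearMap).convex hcl
      fun k => Set.mem_range_self _
  exact ⟨b, φ, hφ, ha.of_linearIsometry e⟩

lemma RDPp.relWeaklyCompact_of_weaklyPDP {X : Type*} [NormedAddCommGroup X] [NormedSpace ℝ X]
    (hX : RDPp p X) (e : E →ₗᵢ[ℝ] StrongDual ℝ X) (hcl : IsClosed (Set.range e))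
    {K : Set E} (hK : WeaklyPDP p K) : RelWeaklyCompact K :=
  .of_image_linearIsometry e hcl (hX _ (hK.image e.toContinuousLinearMap).weaklyPLSet)

end

theorem stmt_14_general {X Z : Type*} [NormedAddCommGroup X] [NormedSpace ℝ X]
    [NormedAddCommGroup Z] [NormedSpace ℝ Z] [CompleteSpace Z]
    (p : ℝ≥0∞) :
    ((RDPp p X → ∀ Y : Submodule ℝ (StrongDual ℝ X), IsClosed (Y : Set (StrongDual ℝ X)) →
        ∀ K : Set ↥Y, WeaklyPDP p K → RelWeaklyCompact K)) ∧
    (RDPp p (StrongDual ℝ Z) → ∀ K : Set Z, WeaklyPDP p K → RelWeaklyCompact K) := by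
  refine ⟨fun hX Y hY K hK => hX.relWeaklyCompact_of_weaklyPDP Y.subtypeₗᵢ ?_ hK,
    fun hZ K hK => hZ.relWeaklyCompact_of_weaklyPDP (inclusionInDoubleDualLi ℝ) ?_ hK⟩
  · simpa using hY
  · exact (inclusionInDoubleDualLi ℝ).isometry.isClosedEmbedding.isClosed_range

/-- For `1 ≤ p < ∞`: if `Y` is a closed subspace of a dual space `X*`
and `X` has property `RDP_p`, then every weakly-`p`-Dunford-Pettis subset of `Y` is
relatively weakly compact (`Y` has property `RDP*_p`); in particular if `Z*` has
property `RDP_p` then `Z` has property `RDP*_p`. -/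
theorem stmt_14 {X Z : Type*} [NormedAddCommGroup X] [NormedSpace ℝ X] [CompleteSpace X]
    [NormedAddCommGroup Z] [NormedSpace ℝ Z] [CompleteSpace Z]
    (p : ℝ≥0∞) (hp : 1 ≤ p) (hp' : p ≠ ⊤) :
    ((RDPp p X → ∀ Y : Submodule ℝ (StrongDual ℝ X), IsClosed (Y : Set (StrongDual ℝ X)) →
        ∀ K : Set ↥Y, WeaklyPDP p K → RelWeaklyCompact K)) ∧
    (RDPp p (StrongDual ℝ Z) → ∀ K : Set Z, WeaklyPDP p K → RelWeaklyCompact K) :=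
  stmt_14_general p
end
end

section
/- Let 1 ≤ p < ∞, let Y be a Banach space with the Gelfand-Phillips property, and let M be a closed subspace of K_{w*}(X*, Y) (the w*-w continuous compact operators from X* to Y) such that for each y* ∈ Y*, the evaluation operator ψ_{y*}: M → X, T ↦ T*(y*), is limited p-convergent. Then M has the p-Gelfand-Phillips property: every limited weakly p-summable sequence in M is norm null. -/
open Filter Topology Metric NormedSpace Bornology ENNReal

noncomputable section

/-- Instances on submodules of `StrongDual ℝ X →L[ℝ] Y` (found automatically by the older Mathlib). -/
noncomputable instance instNormedAddCommGroupSubmoduleDualCLM {X Y : Type*}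
    [NormedAddCommGroup X] [NormedSpace ℝ X] [NormedAddCommGroup Y] [NormedSpace ℝ Y]
    (M : Submodule ℝ (StrongDual ℝ X →L[ℝ] Y)) : NormedAddCommGroup M :=
  @Submodule.normedAddCommGroup ℝ (StrongDual ℝ X →L[ℝ] Y) _ ContinuousLinearMap.toNormedAddCommGroup
    ContinuousLinearMap.module M

noncomputable instance instNormedSpaceSubmoduleDualCLM {X Y : Type*}
    [NormedAddCommGroup X] [NormedSpace ℝ X] [NormedAddCommGroup Y] [NormedSpace ℝ Y]
    (M : Submodule ℝ (StrongDual ℝ X →L[ℝ] Y)) : NormedSpace ℝ M :=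
  @Submodule.normedSpace ℝ ℝ _ _ _ (StrongDual ℝ X →L[ℝ] Y) ContinuousLinearMap.toSeminormedAddCommGroup
    ContinuousLinearMap.toNormedSpace ContinuousLinearMap.module _ M

/-! Choose `‖f k‖ ≤ 1` with `‖T k (f k)‖` almost `‖T k‖`. The vectors `y k = T k (f k)` are
weakly null, because `g (y k) = f k (ψ_g (T k))` and `ψ_g` is limited `p`-convergent. They also
form a limited set: a `w*`-null sequence `g k` in `Y*` composed with evaluation at `f k` is
`w*`-null on `M`, since each `T ∈ M` maps the unit ball into a compact set and `w*`-null
sequences converge uniformly on compact sets. By the Gelfand-Phillips property `(y k)` is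
relatively compact, so, being weakly null, it is norm null, and hence so is `(T k)`. -/

theorem unifNullOn_iff_forall_tendsto {Z : Type*} (g : ℕ → Z → ℝ) (A : Set Z) :
    UnifNullOn g A ↔ ∀ a : ℕ → Z, (∀ n, a n ∈ A) → Tendsto (fun n => g n (a n)) atTop (𝓝 0) := by
  constructor
  · intro h a ha
    rw [Metric.tendsto_atTop]
    intro ε hε
    obtain ⟨N, hN⟩ := h (ε / 2) (half_pos hε)
    exact ⟨N, fun n hn => by
      rw [Real.dist_eq, sub_zero]; exact (hN n hn (a n) (ha n)).trans_lt (half_lt_self hε)⟩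
  · intro h
    by_contra hne
    obtain ⟨ε, hε, hbad⟩ : ∃ ε > 0, ∀ N, ∃ n ≥ N, ∃ a ∈ A, ε < |g n a| := by
      simpa [UnifNullOn] using hne
    obtain ⟨-, -, a₀, ha₀, -⟩ := hbad 0
    have hpick : ∀ n, ∃ a ∈ A, (∃ b ∈ A, ε < |g n b|) → ε < |g n a| := fun n => by
      by_cases hn : ∃ b ∈ A, ε < |g n b|
      · obtain ⟨b, hb, hgb⟩ := hn
        exact ⟨b, hb, fun _ => hgb⟩
      · exact ⟨a₀, ha₀, fun h' => absurd h' hn⟩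
    choose a haA hag using hpick
    obtain ⟨N, hN⟩ := Metric.tendsto_atTop.1 (h a haA) ε hε
    obtain ⟨n, hn, b, hb, hgb⟩ := hbad N
    have := hN n hn
    rw [Real.dist_eq, sub_zero] at this
    exact (hag n ⟨b, hb, hgb⟩).not_gt this

section Limited

variable {Z : Type*} [NormedAddCommGroup Z] [NormedSpace ℝ Z]

theorem LimitedSet.mono {A B : Set Z} (hB : LimitedSet B) (hAB : A ⊆ B) : LimitedSet A :=
  fun f hf ε hε => (hB f hf ε hε).imp fun _ hN n hn a ha => hN n hn a (hAB ha)

theorem WStarNull.exists_norm_le [CompleteSpace Z] {g : ℕ → StrongDual ℝ Z} (hg : WStarNull g) :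
    ∃ C, ∀ n, ‖g n‖ ≤ C :=
  banach_steinhaus fun z => by
    obtain ⟨c, hc⟩ := (hg z).norm.bddAbove_range
    exact ⟨c, fun n => hc (Set.mem_range_self n)⟩

theorem WStarNull.tendsto_apply_of_tendsto [CompleteSpace Z] {g : ℕ → StrongDual ℝ Z}
    (hg : WStarNull g) {z : ℕ → Z} {a : Z} (hz : Tendsto z atTop (𝓝 a)) :
    Tendsto (fun n => g n (z n)) atTop (𝓝 0) := by
  obtain ⟨C, hC⟩ := hg.exists_norm_le
  have hdiff : Tendsto (fun n => g n (z n - a)) atTop (𝓝 0) := by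
    refine squeeze_zero_norm (fun n => ((g n).le_opNorm _).trans
      (mul_le_mul_of_nonneg_right (hC n) (norm_nonneg _))) ?_
    simpa using (tendsto_iff_norm_sub_tendsto_zero.1 hz).const_mul C
  simpa using hdiff.add (hg a)

theorem IsCompact.limitedSet [CompleteSpace Z] {K : Set Z} (hK : IsCompact K) :
    LimitedSet K := by
  intro g hg
  rw [unifNullOn_iff_forall_tendsto]
  intro z hz
  refine tendsto_of_subseq_tendsto fun ns hns => ?_
  obtain ⟨a, -, ms, hms, hlim⟩ := hK.tendsto_subseq fun k => hz (ns k)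
  have hsub : WStarNull fun k => g (ns (ms k)) :=
    fun x => (hg x).comp (hns.comp hms.tendsto_atTop)
  exact ⟨ms, hsub.tendsto_apply_of_tendsto hlim⟩

theorem WeaklyConvTo.exists_norm_le {x : ℕ → Z} (hx : WeaklyConvTo x 0) :
    ∃ C, ∀ n, ‖x n‖ ≤ C := by
  obtain ⟨C, hC⟩ := WStarNull.exists_norm_le (g := fun n => inclusionInDoubleDual ℝ Z (x n))
    fun f => by simpa using hx f
  exact ⟨C, fun n => (inclusionInDoubleDualLi ℝ (E := Z)).norm_map (x n) ▸ hC n⟩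

theorem WeaklyConvTo.tendsto_of_isCompact_closure {x : ℕ → Z} {a : Z} (hx : WeaklyConvTo x a)
    (hK : IsCompact (closure (Set.range x))) : Tendsto x atTop (𝓝 a) := by
  refine tendsto_of_subseq_tendsto fun ns hns => ?_
  obtain ⟨b, -, ms, hms, hlim⟩ :=
    hK.tendsto_subseq fun k => subset_closure (Set.mem_range_self (ns k))
  suffices b = a by exact ⟨ms, this ▸ hlim⟩
  refine (SeparatingDual.eq_iff_forall_dual_eq (R := ℝ)).2 fun f => ?_
  exact tendsto_nhds_unique ((f.continuous.tendsto b).comp hlim)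
    ((hx f).comp (hns.comp hms.tendsto_atTop))

theorem GPspace.tendsto_zero_of_weaklyConvTo (hZ : GPspace Z) {y : ℕ → Z}
    (hweak : WeaklyConvTo y 0) (hlim : LimitedSet (Set.range y)) :
    Tendsto y atTop (𝓝 0) := by
  obtain ⟨C, hC⟩ := hweak.exists_norm_le
  have hbdd : IsBounded (Set.range y) :=
    isBounded_iff_forall_norm_le.2 ⟨C, Set.forall_mem_range.2 hC⟩
  exact hweak.tendsto_of_isCompact_closure (hZ _ hbdd hlim)

end Limited

section CompactOperators

variable {X Y : Type*} [NormedAddCommGroup X] [NormedSpace ℝ X]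
  [NormedAddCommGroup Y] [NormedSpace ℝ Y] [CompleteSpace Y]

theorem IsCompactOperator.limitedSet_image_closedBall {T : X →L[ℝ] Y} (hT : IsCompactOperator T) :
    LimitedSet (T '' closedBall 0 1) := by
  obtain ⟨K, hK, hTK⟩ := hT.image_closedBall_subset_compact (f := (T : X →ₗ[ℝ] Y)) 1
  exact hK.limitedSet.mono hTK

theorem limitedSet_range_apply {M : Submodule ℝ (X →L[ℝ] Y)}
    (hM : ∀ T ∈ M, IsCompactOperator T) {S : ℕ → M} (hS : LimitedSet (Set.range S))
    {f : ℕ → X} (hf : ∀ k, ‖f k‖ ≤ 1) :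
    LimitedSet (Set.range fun k => (S k : X →L[ℝ] Y) (f k)) := by
  intro g hg
  rw [unifNullOn_iff_forall_tendsto]
  intro y hy
  choose n hn using hy
  let χ : ℕ → StrongDual ℝ M := fun k =>
    (g k).comp ((ContinuousLinearMap.apply ℝ Y (f (n k))).comp M.subtypeL)
  have hχ : WStarNull χ := fun T : M =>
    (unifNullOn_iff_forall_tendsto _ _).1
      ((hM T T.prop).limitedSet_image_closedBall g hg) (fun k => (T : X →L[ℝ] Y) (f (n k)))
      fun k => ⟨f (n k), mem_closedBall_zero_iff.2 (hf (n k)), rfl⟩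
  simpa [χ, ← hn] using
    (unifNullOn_iff_forall_tendsto _ _).1 (hS χ hχ) (fun k => S (n k)) fun k => ⟨n k, rfl⟩

end CompactOperators

theorem stmt_16_general {X Y : Type*} [NormedAddCommGroup X] [NormedSpace ℝ X]
    [NormedAddCommGroup Y] [NormedSpace ℝ Y] [CompleteSpace Y]
    (p : ℝ≥0∞)
    (hY : GPspace Y)
    (M : Submodule ℝ (StrongDual ℝ X →L[ℝ] Y))
    (hM : ∀ T ∈ M, WStarToWCont T ∧ IsCompactOperator T)
    (hev : ∀ g : StrongDual ℝ Y, ∀ Tn : ℕ → ↥M, LimitedSet (Set.range Tn) →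
      WeaklyPSummable p Tn →
      ∀ x : ℕ → X, (∀ (n : ℕ) (f : StrongDual ℝ X), g ((Tn n : StrongDual ℝ X →L[ℝ] Y) f) = f (x n)) →
        NormNull x) :
    pGP p ↥M := by
  intro T hlim hwps
  have hnorm (k : ℕ) : ∃ f : StrongDual ℝ X, ‖f‖ ≤ 1 ∧
      ‖(T k : StrongDual ℝ X →L[ℝ] Y)‖ - 1 / (k + 1) < ‖(T k : StrongDual ℝ X →L[ℝ] Y) f‖ := by
    obtain ⟨f, hf1, hf⟩ := (T k : StrongDual ℝ X →L[ℝ] Y).exists_lt_apply_of_lt_opNorm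
      (sub_lt_self _ Nat.one_div_pos_of_nat)
    exact ⟨f, hf1.le, hf⟩
  choose f hf1 hf using hnorm
  have hweak : WeaklyConvTo (fun k => (T k : StrongDual ℝ X →L[ℝ] Y) (f k)) 0 := by
    intro g
    choose x hx using fun k => (hM _ (T k).2).1 g
    refine map_zero g ▸ squeeze_zero_norm (fun k => ?_) (hev g T hlim hwps x hx)
    simpa only [hx, one_mul] using ((f k).le_opNorm (x k)).trans
      (mul_le_mul_of_nonneg_right (hf1 k) (norm_nonneg _))
  have hnull := hY.tendsto_zero_of_weaklyConvTo hweak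
    (limitedSet_range_apply (fun T hT => (hM T hT).2) hlim hf1)
  refine squeeze_zero (fun k => norm_nonneg _) (fun k => (sub_lt_iff_lt_add.1 (hf k)).le) ?_
  simpa using hnull.norm.add tendsto_one_div_add_atTop_nhds_zero_nat

/-- Let `1 ≤ p < ∞`, let `Y` have the Gelfand-Phillips property, and
let `M` be a closed subspace of `K_{w*}(X*, Y)` such that for each `y* ∈ Y*` the
evaluation operator `ψ_{y*} : M → X`, `T ↦ T*(y*)` (given by the representation
`x* (ψ_{y*} T) = y* (T x*)`), is limited `p`-convergent. Then `M` has the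
`p`-Gelfand-Phillips property. -/
theorem stmt_16 {X Y : Type*} [NormedAddCommGroup X] [NormedSpace ℝ X] [CompleteSpace X]
    [NormedAddCommGroup Y] [NormedSpace ℝ Y] [CompleteSpace Y]
    (p : ℝ≥0∞) (hp : 1 ≤ p) (hp' : p ≠ ⊤)
    (hY : GPspace Y)
    (M : Submodule ℝ (StrongDual ℝ X →L[ℝ] Y)) (hMc : IsClosed (M : Set (StrongDual ℝ X →L[ℝ] Y)))
    (hM : ∀ T ∈ M, WStarToWCont T ∧ IsCompactOperator T)
    (hev : ∀ g : StrongDual ℝ Y, ∀ Tn : ℕ → ↥M, LimitedSet (Set.range Tn) →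
      WeaklyPSummable p Tn →
      ∀ x : ℕ → X, (∀ (n : ℕ) (f : StrongDual ℝ X), g ((Tn n : StrongDual ℝ X →L[ℝ] Y) f) = f (x n)) →
        NormNull x) :
    pGP p ↥M :=
  stmt_16_general p hY M hM hev
end
end
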